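/- arXiv:2105.10499 — 6 statements merged into one kernel-verified Lean document; each statement's English description precedes it below -/
import Mathlib

section
/- Let β > 0 and λ^n = 1 − β/√n for n with √n > β, and for thresholds K^n > 0 define the Class-1 traffic intensity ρ₁^n = λ^n ∫₀^{K^n} t f(t) dt. If K^n → ∞ and there exists δ ∈ (0, 1/2) such that n^{1/2−δ} F̄(K^n) → ∞ as n → ∞, then n^{1/2−δ} (1 − ρ₁^n) / K^n → ∞ as n → ∞. -/
open MeasureTheory Filter Set

/-- With `f` a probability density on `(0,∞)` with unit mean, tail cdf
`F̄ = 1 - F` positive everywhere on `[0,∞)`, arrival rates `λ^n = 1 - β/√n`, and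
Class-1 traffic intensity `ρ₁^n = λ^n ∫₀^{K^n} t f(t) dt`: if `K^n → ∞` and
`n^{1/2-δ} F̄(K^n) → ∞` for some `δ ∈ (0,1/2)`, then
`n^{1/2-δ} (1 - ρ₁^n) / K^n → ∞`. -/
theorem stmt_0
    (f : ℝ → ℝ) (hf_meas : Measurable f) (hf_nonneg : ∀ t, 0 ≤ f t)
    (hf_prob : ∫ t in Ioi (0:ℝ), f t = 1)
    (hf_mean : ∫ t in Ioi (0:ℝ), t * f t = 1)
    (Fbar : ℝ → ℝ)
    (hFbar : ∀ x, Fbar x = 1 - ∫ t in Ioc (0:ℝ) x, f t)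
    (hFbar_pos : ∀ x, 0 ≤ x → 0 < Fbar x)
    (β : ℝ) (hβ : 0 < β)
    (K : ℕ → ℝ) (hK_pos : ∀ n, 0 < K n)
    (ρ1 : ℕ → ℝ)
    (hρ1 : ∀ n, ρ1 n = (1 - β / Real.sqrt n) * ∫ t in Ioc (0:ℝ) (K n), t * f t)
    (hK_tendsto : Tendsto K atTop atTop)
    (δ : ℝ) (hδ : δ ∈ Ioo (0:ℝ) (1/2))
    (hthresh : Tendsto (fun n : ℕ => (n:ℝ) ^ ((1:ℝ)/2 - δ) * Fbar (K n)) atTop atTop) :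
    Tendsto (fun n : ℕ => (n:ℝ) ^ ((1:ℝ)/2 - δ) * (1 - ρ1 n) / K n) atTop atTop := by

  have hf_int : IntegrableOn f (Ioi (0:ℝ)) := by
    by_contra h
    rw [integral_undef h] at hf_prob; norm_num at hf_prob
  have htf_int : IntegrableOn (fun t => t * f t) (Ioi (0:ℝ)) := by
    by_contra h
    rw [integral_undef h] at hf_mean; norm_num at hf_mean
  have key : ∀ n, K n * Fbar (K n) ≤ 1 - ρ1 n := by
    intro n
    have hKn := hK_pos n
    have hsub1 : Ioc (0:ℝ) (K n) ⊆ Ioi 0 := Ioc_subset_Ioi_self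
    have hsub2 : Ioi (K n) ⊆ Ioi (0:ℝ) := Ioi_subset_Ioi hKn.le
    have hdisj : Disjoint (Ioc (0:ℝ) (K n)) (Ioi (K n)) := Ioc_disjoint_Ioi le_rfl
    have hsplit : Ioc (0:ℝ) (K n) ∪ Ioi (K n) = Ioi 0 := Ioc_union_Ioi_eq_Ioi hKn.le
    -- split f integral
    have hf_split : (∫ t in Ioc (0:ℝ) (K n), f t) + ∫ t in Ioi (K n), f t = 1 := by
      rw [← setIntegral_union hdisj measurableSet_Ioi (hf_int.mono_set hsub1)
        (hf_int.mono_set hsub2), hsplit, hf_prob]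
    have htf_split : (∫ t in Ioc (0:ℝ) (K n), t * f t) + ∫ t in Ioi (K n), t * f t = 1 := by
      rw [← setIntegral_union hdisj measurableSet_Ioi (htf_int.mono_set hsub1)
        (htf_int.mono_set hsub2), hsplit, hf_mean]
    have hFbar_eq : Fbar (K n) = ∫ t in Ioi (K n), f t := by
      rw [hFbar]; linarith
    have hineq : K n * ∫ t in Ioi (K n), f t ≤ ∫ t in Ioi (K n), t * f t := by
      rw [← integral_const_mul]
      refine setIntegral_mono_on ((hf_int.mono_set hsub2).const_mul _)
        (htf_int.mono_set hsub2) measurableSet_Ioi ?_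
      intro x hx
      exact mul_le_mul_of_nonneg_right (le_of_lt hx) (hf_nonneg x)
    have hI_nonneg : 0 ≤ ∫ t in Ioc (0:ℝ) (K n), t * f t :=
      setIntegral_nonneg measurableSet_Ioc
        (fun x hx => mul_nonneg (le_of_lt hx.1) (hf_nonneg x))
    have hlam : β / Real.sqrt n ≥ 0 := div_nonneg hβ.le (Real.sqrt_nonneg _)
    rw [hρ1, hFbar_eq]
    nlinarith [mul_nonneg hlam hI_nonneg]
  refine tendsto_atTop_mono (fun n => ?_) hthresh
  have hKn := hK_pos n
  have hp : (0:ℝ) ≤ (n:ℝ) ^ ((1:ℝ)/2 - δ) := Real.rpow_nonneg (Nat.cast_nonneg n) _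
  rw [le_div_iff₀ hKn]
  nlinarith [key n, mul_le_mul_of_nonneg_left (key n) hp]
end

section
/- Let β > 0 and λ^n = 1 − β/√n for n with √n > β, and for thresholds K^n > 0 define ρ₁^n = λ^n ∫₀^{K^n} t f(t) dt and ρ₂^n = λ^n ∫_{K^n}^∞ t f(t) dt. If K^n → ∞ and there exists δ ∈ (0, 1/2) such that n^{1/2−δ} F̄(K^n) → ∞ as n → ∞, then ρ₂^n / (1 − ρ₁^n) → 1 as n → ∞. -/
open MeasureTheory Filter Set Topology

/-!
Since `∫₀^∞ t f = 1`, the denominator is `1 - ρ₁ = β/√n + ρ₂`, so the ratio is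
`√n ρ₂ / (β + √n ρ₂)` and it suffices that `√n ρ₂ → ∞`. Markov's inequality on the tail gives
`ρ₂ ≥ λ K F̄(K)`, hence `√n ρ₂ ≥ λ · K · n^{1/2-δ} F̄(K)`, a product of factors tending to `1`, `∞`
and `∞`.
-/

lemma setIntegral_Ioc_add_setIntegral_Ioi {g : ℝ → ℝ} {a b : ℝ} (hab : a ≤ b)
    (hg : IntegrableOn g (Ioi a)) :
    (∫ t in Ioc a b, g t) + ∫ t in Ioi b, g t = ∫ t in Ioi a, g t := by
  rw [← intervalIntegral.integral_of_le hab]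
  exact intervalIntegral.integral_interval_add_Ioi hg (hg.mono_set (Ioi_subset_Ioi hab))

lemma mul_setIntegral_Ioi_le_setIntegral_Ioi_mul {f : ℝ → ℝ} {a : ℝ}
    (hf : ∀ t ∈ Ioi a, 0 ≤ f t) (hfi : IntegrableOn f (Ioi a))
    (htf : IntegrableOn (fun t => t * f t) (Ioi a)) :
    a * ∫ t in Ioi a, f t ≤ ∫ t in Ioi a, t * f t := by
  rw [← integral_const_mul]
  exact setIntegral_mono_on (hfi.const_mul a) htf measurableSet_Ioi
    fun t ht => mul_le_mul_of_nonneg_right (le_of_lt ht) (hf t ht)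

lemma tendsto_div_const_add_nhds_one {α : Type*} {l : Filter α} {a : α → ℝ} (c : ℝ)
    (ha : Tendsto a l atTop) : Tendsto (fun i => a i / (c + a i)) l (𝓝 1) := by
  have hlim : Tendsto (fun i => 1 / (c / a i + 1)) l (𝓝 1) := by
    simpa using ((tendsto_const_nhds (x := c)).div_atTop ha).add_const 1 |>.inv₀ (by norm_num)
  refine hlim.congr' ?_
  filter_upwards [ha.eventually_gt_atTop 0] with i hi
  field_simp

lemma tendsto_div_div_add_nhds_one {α : Type*} {l : Filter α} {s x : α → ℝ} (c : ℝ)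
    (hs : ∀ᶠ i in l, s i ≠ 0) (h : Tendsto (fun i => s i * x i) l atTop) :
    Tendsto (fun i => x i / (c / s i + x i)) l (𝓝 1) := by
  refine (tendsto_div_const_add_nhds_one c h).congr' ?_
  filter_upwards [hs] with i hi
  rw [← mul_div_mul_left (x i) _ hi, mul_add, mul_div_cancel₀ c hi]

lemma tendsto_sqrt_mul_setIntegral_Ioi_mul_atTop {f : ℝ → ℝ} (hf : ∀ t, 0 ≤ f t)
    (hfi : IntegrableOn f (Ioi 0)) (htf : IntegrableOn (fun t => t * f t) (Ioi 0))
    {K : ℕ → ℝ} (hK : Tendsto K atTop atTop) {p : ℝ} (hp : p ≤ 1 / 2)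
    (h : Tendsto (fun n : ℕ => (n : ℝ) ^ p * ∫ t in Ioi (K n), f t) atTop atTop) :
    Tendsto (fun n : ℕ => Real.sqrt n * ∫ t in Ioi (K n), t * f t) atTop atTop := by
  refine tendsto_atTop_mono' _ ?_ (hK.atTop_mul_atTop₀ h)
  filter_upwards [hK.eventually_ge_atTop 0, eventually_ge_atTop 1] with n hKn hn
  have hrpow : (n : ℝ) ^ p ≤ Real.sqrt n := by
    rw [Real.sqrt_eq_rpow]
    exact Real.rpow_le_rpow_of_exponent_le (by exact_mod_cast hn) hp
  have htail : 0 ≤ ∫ t in Ioi (K n), f t := setIntegral_nonneg measurableSet_Ioi fun t _ => hf t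
  have hmarkov := mul_setIntegral_Ioi_le_setIntegral_Ioi_mul (fun t _ => hf t)
    (hfi.mono_set (Ioi_subset_Ioi hKn)) (htf.mono_set (Ioi_subset_Ioi hKn))
  calc K n * ((n : ℝ) ^ p * ∫ t in Ioi (K n), f t)
      ≤ Real.sqrt n * (K n * ∫ t in Ioi (K n), f t) := by
        rw [mul_left_comm]; gcongr
    _ ≤ _ := by gcongr

theorem stmt_6_general
    (f : ℝ → ℝ) (hf_nonneg : ∀ t, 0 ≤ f t)
    (hf_prob : ∫ t in Ioi (0:ℝ), f t = 1)
    (hf_mean : ∫ t in Ioi (0:ℝ), t * f t = 1)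
    (Fbar : ℝ → ℝ)
    (hFbar : ∀ x, Fbar x = 1 - ∫ t in Ioc (0:ℝ) x, f t)
    (β : ℝ)
    (K : ℕ → ℝ)
    (ρ1 ρ2 : ℕ → ℝ)
    (hρ1 : ∀ n, ρ1 n = (1 - β / Real.sqrt n) * ∫ t in Ioc (0:ℝ) (K n), t * f t)
    (hρ2 : ∀ n, ρ2 n = (1 - β / Real.sqrt n) * ∫ t in Ioi (K n), t * f t)
    (hK_tendsto : Tendsto K atTop atTop)
    (δ : ℝ) (hδ : δ ∈ Ioo (0:ℝ) (1/2))
    (hthresh : Tendsto (fun n : ℕ => (n:ℝ) ^ ((1:ℝ)/2 - δ) * Fbar (K n)) atTop atTop) :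
    Tendsto (fun n : ℕ => ρ2 n / (1 - ρ1 n)) atTop (nhds 1) := by
  have hmean_int : IntegrableOn (fun t => t * f t) (Ioi 0) :=
    .of_integral_ne_zero (by simp [hf_mean])
  have hprob_int : IntegrableOn f (Ioi 0) := .of_integral_ne_zero (by simp [hf_prob])
  have hK_nonneg : ∀ᶠ n in atTop, 0 ≤ K n := hK_tendsto.eventually_ge_atTop 0
  have hden : ∀ᶠ n in atTop, 1 - ρ1 n = β / Real.sqrt n + ρ2 n := by
    filter_upwards [hK_nonneg] with n hn
    have hsplit := setIntegral_Ioc_add_setIntegral_Ioi hn hmean_int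
    rw [hf_mean] at hsplit
    rw [hρ1, hρ2]
    linear_combination (β / Real.sqrt n - 1) * hsplit
  have hFbar_tail : ∀ᶠ n in atTop, Fbar (K n) = ∫ t in Ioi (K n), f t := by
    filter_upwards [hK_nonneg] with n hn
    rw [hFbar, ← hf_prob, ← setIntegral_Ioc_add_setIntegral_Ioi hn hprob_int, add_sub_cancel_left]
  have hrate : Tendsto (fun n : ℕ => 1 - β / Real.sqrt n) atTop (𝓝 1) := by
    simpa using tendsto_const_nhds.sub <| tendsto_const_nhds.div_atTop <|
      Real.tendsto_sqrt_atTop.comp tendsto_natCast_atTop_atTop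
  have hgrowth : Tendsto (fun n : ℕ => Real.sqrt n * ρ2 n) atTop atTop := by
    have hmoment := tendsto_sqrt_mul_setIntegral_Ioi_mul_atTop hf_nonneg hprob_int hmean_int
      hK_tendsto (p := 1 / 2 - δ) (by linarith [hδ.1])
      (hthresh.congr' (hFbar_tail.mono fun n hn => by simp only [hn]))
    refine (hrate.pos_mul_atTop one_pos hmoment).congr fun n => ?_
    rw [hρ2, mul_left_comm]
  refine (tendsto_div_div_add_nhds_one β ?_ hgrowth).congr' ?_
  · filter_upwards [eventually_ge_atTop 1] with n hn
    exact (Real.sqrt_pos.mpr (by exact_mod_cast hn)).ne'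
  · exact hden.mono fun n hn => by simp only [hn]

/-- With `f` a probability density on `(0,∞)` with unit mean and positive
tail cdf `F̄`, arrival rates `λ^n = 1 - β/√n`, Class-1 and Class-2 traffic intensities
`ρ₁^n = λ^n ∫₀^{K^n} t f(t) dt` and `ρ₂^n = λ^n ∫_{K^n}^∞ t f(t) dt`: if `K^n → ∞` and
`n^{1/2-δ} F̄(K^n) → ∞` for some `δ ∈ (0,1/2)`, then `ρ₂^n / (1 - ρ₁^n) → 1`. -/
theorem stmt_6
    (f : ℝ → ℝ) (hf_meas : Measurable f) (hf_nonneg : ∀ t, 0 ≤ f t)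
    (hf_prob : ∫ t in Ioi (0:ℝ), f t = 1)
    (hf_mean : ∫ t in Ioi (0:ℝ), t * f t = 1)
    (Fbar : ℝ → ℝ)
    (hFbar : ∀ x, Fbar x = 1 - ∫ t in Ioc (0:ℝ) x, f t)
    (hFbar_pos : ∀ x, 0 ≤ x → 0 < Fbar x)
    (β : ℝ) (hβ : 0 < β)
    (K : ℕ → ℝ) (hK_pos : ∀ n, 0 < K n)
    (ρ1 ρ2 : ℕ → ℝ)
    (hρ1 : ∀ n, ρ1 n = (1 - β / Real.sqrt n) * ∫ t in Ioc (0:ℝ) (K n), t * f t)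
    (hρ2 : ∀ n, ρ2 n = (1 - β / Real.sqrt n) * ∫ t in Ioi (K n), t * f t)
    (hK_tendsto : Tendsto K atTop atTop)
    (δ : ℝ) (hδ : δ ∈ Ioo (0:ℝ) (1/2))
    (hthresh : Tendsto (fun n : ℕ => (n:ℝ) ^ ((1:ℝ)/2 - δ) * Fbar (K n)) atTop atTop) :
    Tendsto (fun n : ℕ => ρ2 n / (1 - ρ1 n)) atTop (nhds 1) :=
  stmt_6_general f hf_nonneg hf_prob hf_mean Fbar hFbar β K ρ1 ρ2 hρ1 hρ2 hK_tendsto δ hδ hthresh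
end

section
/- Suppose additionally ∫₀^∞ t² f(t) dt = 1 + σ² < ∞. Let β > 0, λ^n = 1 − β/√n (for n with √n > β), and K^n > 0 thresholds; define λ₁^n = λ^n F(K^n), λ₂^n = λ^n F̄(K^n), ρ₁^n = λ^n ∫₀^{K^n} t f(t) dt, m₂^n = (∫_{K^n}^∞ t f(t) dt)/F̄(K^n), ρ₂^n = λ₂^n m₂^n, s₁^n = (∫₀^{K^n} t² f(t) dt)/F(K^n), and the steady-state mean queue length of the two-class preemptive priority M/GI/1 queue E_n = ρ₁^n + ρ₂^n/(1−ρ₁^n) + (λ₁^n)² s₁^n / (2(1−ρ₁^n)) + λ^n λ₂^n (1+σ²) / (2(1−ρ₁^n)(1−λ^n)). If K^n → ∞, √n (1−ρ₁^n)/K^n → ∞, and K^n / m₂^n → γ for some γ > 0, then (K^n/√n) E_n → γ(1+σ²)/(2β) as n → ∞. -/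
open MeasureTheory Filter Set

set_option maxHeartbeats 1600000 in
/-- With `f` a probability density on `(0,∞)` with unit mean, positive tail
cdf `F̄`, and finite second moment `∫ t² f(t) dt = 1 + σ²`: let `λ^n = 1 - β/√n`,
`λ₁^n = λ^n F(K^n)`, `λ₂^n = λ^n F̄(K^n)`, `ρ₁^n = λ^n ∫₀^{K^n} t f(t) dt`,
`m₂^n = (∫_{K^n}^∞ t f(t) dt)/F̄(K^n)`, `ρ₂^n = λ₂^n m₂^n`,
`s₁^n = (∫₀^{K^n} t² f(t) dt)/F(K^n)`, and the steady-state mean queue length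
`E_n = ρ₁^n + ρ₂^n/(1-ρ₁^n) + (λ₁^n)² s₁^n/(2(1-ρ₁^n))
      + λ^n λ₂^n (1+σ²)/(2(1-ρ₁^n)(1-λ^n))`.
If `K^n → ∞`, `√n (1-ρ₁^n)/K^n → ∞`, and `K^n/m₂^n → γ > 0`, then
`(K^n/√n) E_n → γ(1+σ²)/(2β)`. -/
theorem stmt_8
    (f : ℝ → ℝ) (hf_meas : Measurable f) (hf_nonneg : ∀ t, 0 ≤ f t)
    (hf_prob : ∫ t in Ioi (0:ℝ), f t = 1)
    (hf_mean : ∫ t in Ioi (0:ℝ), t * f t = 1)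
    (Fbar : ℝ → ℝ)
    (hFbar : ∀ x, Fbar x = 1 - ∫ t in Ioc (0:ℝ) x, f t)
    (hFbar_pos : ∀ x, 0 ≤ x → 0 < Fbar x)
    (σ2 : ℝ) (hσ2 : ∫ t in Ioi (0:ℝ), t ^ 2 * f t = 1 + σ2)
    (hmoment : IntegrableOn (fun t : ℝ => t ^ 2 * f t) (Ioi (0:ℝ)))
    (β : ℝ) (hβ : 0 < β)
    (K : ℕ → ℝ) (hK_pos : ∀ n, 0 < K n)
    (lam lam1 lam2 ρ1 m2 ρ2 s1 E : ℕ → ℝ)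
    (hlam : ∀ n, lam n = 1 - β / Real.sqrt n)
    (hlam1 : ∀ n, lam1 n = lam n * ∫ t in Ioc (0:ℝ) (K n), f t)
    (hlam2 : ∀ n, lam2 n = lam n * Fbar (K n))
    (hρ1 : ∀ n, ρ1 n = lam n * ∫ t in Ioc (0:ℝ) (K n), t * f t)
    (hm2 : ∀ n, m2 n = (∫ t in Ioi (K n), t * f t) / Fbar (K n))
    (hρ2 : ∀ n, ρ2 n = lam2 n * m2 n)
    (hs1 : ∀ n, s1 n = (∫ t in Ioc (0:ℝ) (K n), t ^ 2 * f t) / ∫ t in Ioc (0:ℝ) (K n), f t)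
    (hE : ∀ n, E n = ρ1 n + ρ2 n / (1 - ρ1 n) + (lam1 n) ^ 2 * s1 n / (2 * (1 - ρ1 n))
      + lam n * lam2 n * (1 + σ2) / (2 * (1 - ρ1 n) * (1 - lam n)))
    (hK_tendsto : Tendsto K atTop atTop)
    (hssc : Tendsto (fun n : ℕ => Real.sqrt n * (1 - ρ1 n) / K n) atTop atTop)
    (γ : ℝ) (hγ_pos : 0 < γ)
    (hγ : Tendsto (fun n : ℕ => K n / m2 n) atTop (nhds γ)) :
    Tendsto (fun n : ℕ => K n / Real.sqrt n * E n) atTop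
      (nhds (γ * (1 + σ2) / (2 * β))) := by
  -- notation
  set s : ℕ → ℝ := fun n => Real.sqrt n with hs
  set a : ℕ → ℝ := fun n => s n * (1 - ρ1 n) / K n with ha
  -- integrability of f and t*f on (0,∞)
  have hI0 : IntegrableOn f (Ioi (0:ℝ)) := by
    by_contra h
    rw [MeasureTheory.integral_undef h] at hf_prob
    norm_num at hf_prob
  have hI1 : IntegrableOn (fun t => t * f t) (Ioi (0:ℝ)) := by
    by_contra h
    rw [MeasureTheory.integral_undef h] at hf_mean
    norm_num at hf_mean
  -- splitting of integrals at K n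
  have hsplit : ∀ (g : ℝ → ℝ), IntegrableOn g (Ioi (0:ℝ)) → ∀ n,
      ∫ t in Ioi (0:ℝ), g t = (∫ t in Ioc (0:ℝ) (K n), g t) + ∫ t in Ioi (K n), g t := by
    intro g hg n
    rw [← Ioc_union_Ioi_eq_Ioi (hK_pos n).le,
      setIntegral_union (Ioc_disjoint_Ioi le_rfl) measurableSet_Ioi
        (hg.mono_set Ioc_subset_Ioi_self)
        (hg.mono_set (Ioi_subset_Ioi (hK_pos n).le))]
  -- Fbar at K n equals the tail integral
  have hFbarEq : ∀ n, Fbar (K n) = ∫ t in Ioi (K n), f t := by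
    intro n
    have := hsplit f hI0 n
    rw [hf_prob] at this
    rw [hFbar]
    linarith
  have hT_pos : ∀ n, 0 < ∫ t in Ioi (K n), f t := by
    intro n
    rw [← hFbarEq n]
    exact hFbar_pos _ (hK_pos n).le
  -- tail of t*f is positive
  have hJT_pos : ∀ n, 0 < ∫ t in Ioi (K n), t * f t := by
    intro n
    have h1 : ∫ t in Ioi (K n), K n * f t ≤ ∫ t in Ioi (K n), t * f t := by
      apply setIntegral_mono_on
      · exact (hI0.mono_set (Ioi_subset_Ioi (hK_pos n).le)).const_mul _
      · exact hI1.mono_set (Ioi_subset_Ioi (hK_pos n).le)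
      · exact measurableSet_Ioi
      · intro t ht
        exact mul_le_mul_of_nonneg_right (le_of_lt ht) (hf_nonneg t)
    have h2 : ∫ t in Ioi (K n), K n * f t = K n * ∫ t in Ioi (K n), f t :=
      integral_const_mul _ _
    have := mul_pos (hK_pos n) (hT_pos n)
    linarith [h1, h2.symm.le]
  -- limits of truncated integrals
  have hlimIoc : ∀ (g : ℝ → ℝ), IntegrableOn g (Ioi (0:ℝ)) →
      Tendsto (fun n => ∫ t in Ioc (0:ℝ) (K n), g t) atTop (nhds (∫ t in Ioi (0:ℝ), g t)) := by
    intro g hg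
    have h := MeasureTheory.intervalIntegral_tendsto_integral_Ioi 0 hg hK_tendsto
    refine h.congr fun n => ?_
    rw [intervalIntegral.integral_of_le (hK_pos n).le]
  have hJ1_lim : Tendsto (fun n => ∫ t in Ioc (0:ℝ) (K n), t * f t) atTop (nhds 1) := by
    have := hlimIoc _ hI1; rwa [hf_mean] at this
  have hI1_lim : Tendsto (fun n => ∫ t in Ioc (0:ℝ) (K n), f t) atTop (nhds 1) := by
    have := hlimIoc _ hI0; rwa [hf_prob] at this
  have hS_lim : Tendsto (fun n => ∫ t in Ioc (0:ℝ) (K n), t ^ 2 * f t) atTop (nhds (1 + σ2)) := by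
    have := hlimIoc _ hmoment; rwa [hσ2] at this
  have hJT_lim : Tendsto (fun n => ∫ t in Ioi (K n), t * f t) atTop (nhds 0) := by
    have h : ∀ n, ∫ t in Ioi (K n), t * f t = 1 - ∫ t in Ioc (0:ℝ) (K n), t * f t := by
      intro n
      have := hsplit _ hI1 n
      rw [hf_mean] at this
      linarith
    simp only [h]
    have := hJ1_lim.const_sub 1
    simpa using this
  -- sqrt n → ∞
  have hs_top : Tendsto s atTop atTop := by
    have h := (tendsto_rpow_atTop (by norm_num : (0:ℝ) < 1/2)).comp tendsto_natCast_atTop_atTop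
    exact h.congr fun n => (Real.sqrt_eq_rpow _).symm
  -- lam → 1
  have hlam_lim : Tendsto lam atTop (nhds 1) := by
    have h : Tendsto (fun n => β / s n) atTop (nhds 0) :=
      Tendsto.div_atTop tendsto_const_nhds hs_top
    have := h.const_sub 1
    simp only [sub_zero] at this
    exact this.congr fun n => (hlam n).symm
  -- a⁻¹ → 0
  have hainv : Tendsto (fun n => (a n)⁻¹) atTop (nhds 0) := hssc.inv_tendsto_atTop
  -- ρ1 → 1
  have hρ1_lim : Tendsto ρ1 atTop (nhds 1) := by
    have := hlam_lim.mul hJ1_lim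
    rw [mul_one] at this
    exact this.congr fun n => (hρ1 n).symm
  -- ρ2 = lam * tail, → 0
  have hρ2_eq : ∀ n, ρ2 n = lam n * ∫ t in Ioi (K n), t * f t := by
    intro n
    rw [hρ2, hlam2, hm2, hFbarEq]
    field_simp [(hT_pos n).ne']
  have hρ2_lim : Tendsto ρ2 atTop (nhds 0) := by
    have := hlam_lim.mul hJT_lim
    rw [mul_zero] at this
    exact this.congr fun n => (hρ2_eq n).symm
  -- lam1 → 1
  have hlam1_lim : Tendsto lam1 atTop (nhds 1) := by
    have := hlam_lim.mul hI1_lim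
    rw [mul_one] at this
    exact this.congr fun n => (hlam1 n).symm
  -- s1 → 1 + σ2
  have hs1_lim : Tendsto s1 atTop (nhds (1 + σ2)) := by
    have := hS_lim.div hI1_lim one_ne_zero
    rw [div_one] at this
    exact this.congr fun n => (hs1 n).symm
  -- K/√n → 0
  have hKs_lim : Tendsto (fun n => K n / s n) atTop (nhds 0) := by
    have hev : ∀ᶠ n in atTop, (1 - ρ1 n) * (a n)⁻¹ = K n / s n := by
      filter_upwards [hssc.eventually_ge_atTop 1, hs_top.eventually_gt_atTop 0] with n h1 h2
      have hKn := hK_pos n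
      have han : 0 < a n := lt_of_lt_of_le one_pos h1
      have hρpos : 0 < 1 - ρ1 n := by
        have h3 : 0 < s n * (1 - ρ1 n) := by
          rcases div_pos_iff.mp han with ⟨h3, _⟩ | ⟨_, h4⟩
          · exact h3
          · exact absurd hKn (not_lt.mpr h4.le)
        nlinarith
      show (1 - ρ1 n) * (s n * (1 - ρ1 n) / K n)⁻¹ = K n / s n
      field_simp
    have h0 := (hρ1_lim.const_sub 1).mul hainv
    simp only [sub_self, mul_zero] at h0
    exact (h0.congr' hev)
  -- β/K → 0
  have hβK : Tendsto (fun n => β / K n) atTop (nhds 0) :=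
    Tendsto.div_atTop tendsto_const_nhds hK_tendsto
  -- the auxiliary expression g
  set g : ℕ → ℝ := fun n =>
    K n / s n * ρ1 n + ρ2 n * (a n)⁻¹ + lam1 n ^ 2 * s1 n / 2 * (a n)⁻¹
      + lam n ^ 2 * (1 + σ2) / (2 * β) * (K n / m2 n)
        * ((lam n)⁻¹ * (1 - β / K n * (a n)⁻¹)) with hg
  -- limit of g
  have hg_lim : Tendsto g atTop
      (nhds (0 * 1 + 0 * 0 + 1 ^ 2 * (1 + σ2) / 2 * 0
        + 1 ^ 2 * (1 + σ2) / (2 * β) * γ * ((1:ℝ)⁻¹ * (1 - 0 * 0)))) := by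
    refine (((hKs_lim.mul hρ1_lim).add (hρ2_lim.mul hainv)).add
      ((((hlam1_lim.pow 2).mul hs1_lim).div_const 2).mul hainv)).add ?_
    exact ((((hlam_lim.pow 2).mul_const (1 + σ2)).div_const (2 * β)).mul hγ).mul
      ((hlam_lim.inv₀ one_ne_zero).mul ((hβK.mul hainv).const_sub 1))
  -- eventual equality g = K/√n * E
  have hev : g =ᶠ[atTop] fun n => K n / s n * E n := by
    filter_upwards [hssc.eventually_ge_atTop 1, hs_top.eventually_gt_atTop β,
      hs_top.eventually_gt_atTop 0] with n h1 hsβ hs0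
    have hKn := hK_pos n
    have han : 0 < a n := lt_of_lt_of_le one_pos h1
    have hρpos : 0 < 1 - ρ1 n := by
      have h2 : 0 < s n * (1 - ρ1 n) := by
        have := (div_pos_iff.mp han).resolve_right
          (fun ⟨_, h⟩ => absurd hKn (not_lt.mpr h.le))
        exact this.1
      nlinarith
    have hlam_pos : 0 < lam n := by
      rw [hlam]
      have : β / s n < 1 := (div_lt_one hs0).mpr hsβ
      linarith
    have h1lam : 1 - lam n = β / s n := by rw [hlam]; ring
    have hTn := hT_pos n
    have hJTn := hJT_pos n
    -- key identity: 1 - ρ1 = β/√n + lam * tail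
    have hkey : 1 - ρ1 n = β / s n + lam n * ∫ t in Ioi (K n), t * f t := by
      have hsp := hsplit _ hI1 n
      rw [hf_mean] at hsp
      rw [hρ1, hlam]
      rw [show (∫ t in Ioc (0:ℝ) (K n), t * f t) = 1 - ∫ t in Ioi (K n), t * f t by linarith]
      ring
    have hainv_eq : (a n)⁻¹ = K n / (s n * (1 - ρ1 n)) := by
      rw [ha, inv_div]
    have hpos2 : 0 < β / s n + lam n * ∫ t in Ioi (K n), t * f t :=
      add_pos (div_pos hβ hs0) (mul_pos hlam_pos hJTn)
    simp only [hg]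
    rw [hE n, hρ2_eq n, hlam2 n, hm2 n, hFbarEq n, hainv_eq, h1lam, hkey]
    field_simp [hs0.ne', hKn.ne', hlam_pos.ne', hTn.ne', hJTn.ne', hβ.ne', hpos2.ne']
    ring
  have := hg_lim.congr' hev
  convert this using 2
  norm_num
  ring
end

section
/- Let v and v̂ be real-valued random variables on a probability space with v ≥ 0 almost surely, v integrable, and |v − v̂| ≤ M almost surely for some constant M > 0. Then for every K > 0 with P(v > K + M) > 0 (which implies P(v̂ > K) > 0), E[v · 1{v̂ > K}] / P(v̂ > K) ≤ (K + M) + E[v · 1{v > K + M}] / P(v > K + M); equivalently, E[v | v̂ > K] ≤ (K + M) + E[v | v > K + M]. -/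
/-!
Up to a null set, `{v > K + M} ⊆ {v̂ > K}` because `v̂ ≥ v - M`; this gives the positivity claim.
Split `∫_{v̂ > K} v` along `{v > K + M}`: off that set `v ≤ K + M`, which contributes at most
`(K + M) · P(v̂ > K)`, and on it the integral is at most `∫_{v > K + M} v` since `v ≥ 0`.
Dividing by `P(v̂ > K) ≥ P(v > K + M)` gives the bound.
-/

open MeasureTheory Set

namespace MeasureTheory

variable {Ω : Type*} [MeasurableSpace Ω] {μ : Measure Ω} [IsFiniteMeasure μ]
  {f : Ω → ℝ} {s t : Set Ω} {c : ℝ}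

theorem setIntegral_le_mul_measureReal_add_setIntegral (hf : Integrable f μ)
    (hf_nonneg : 0 ≤ᵐ[μ] f) (hs : MeasurableSet s) (ht : MeasurableSet t) (hc : 0 ≤ c)
    (hfc : ∀ x ∈ s \ t, f x ≤ c) :
    ∫ x in s, f x ∂μ ≤ c * μ.real s + ∫ x in t, f x ∂μ := by
  rw [← integral_inter_add_sdiff ht hf.integrableOn]
  have h_inter : ∫ x in s ∩ t, f x ∂μ ≤ ∫ x in t, f x ∂μ :=
    setIntegral_mono_set hf.integrableOn (ae_restrict_of_ae hf_nonneg)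
      (Filter.Eventually.of_forall inter_subset_right)
  have h_sdiff : ∫ x in s \ t, f x ∂μ ≤ c * μ.real (s \ t) := by
    calc ∫ x in s \ t, f x ∂μ ≤ ∫ _ in s \ t, c ∂μ :=
          setIntegral_mono_on hf.integrableOn integrableOn_const (hs.diff ht) hfc
      _ = c * μ.real (s \ t) := by rw [setIntegral_const, smul_eq_mul, mul_comm]
  have h_measure : c * μ.real (s \ t) ≤ c * μ.real s :=
    mul_le_mul_of_nonneg_left (measureReal_mono sdiff_subset) hc
  linarith

theorem setIntegral_div_le_add_setIntegral_div (hf : Integrable f μ)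
    (hf_nonneg : 0 ≤ᵐ[μ] f) (hs : MeasurableSet s) (ht : MeasurableSet t) (hc : 0 ≤ c)
    (hfc : ∀ x ∈ s \ t, f x ≤ c) (hts : t ≤ᵐ[μ] s) (ht_pos : 0 < μ t) :
    (∫ x in s, f x ∂μ) / μ.real s ≤ c + (∫ x in t, f x ∂μ) / μ.real t := by
  have ht_real_pos : 0 < μ.real t := ENNReal.toReal_pos ht_pos.ne' (measure_ne_top μ t)
  have hts_real : μ.real t ≤ μ.real s :=
    ENNReal.toReal_mono (measure_ne_top μ s) (measure_mono_ae hts)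
  have hs_real_pos : 0 < μ.real s := ht_real_pos.trans_le hts_real
  have ht_integral_nonneg : 0 ≤ ∫ x in t, f x ∂μ := setIntegral_nonneg_of_ae hf_nonneg
  calc (∫ x in s, f x ∂μ) / μ.real s
      ≤ (c * μ.real s + ∫ x in t, f x ∂μ) / μ.real s := by
        gcongr; exact setIntegral_le_mul_measureReal_add_setIntegral hf hf_nonneg hs ht hc hfc
    _ = c + (∫ x in t, f x ∂μ) / μ.real s := by field_simp
    _ ≤ c + (∫ x in t, f x ∂μ) / μ.real t := by gcongr

end MeasureTheory

/-- Let `v, v̂` be real random variables with `v ≥ 0` a.s., `v` integrable,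
and `|v - v̂| ≤ M` a.s. for some `M > 0`. Then for every `K > 0` with
`P(v > K + M) > 0` (which implies `P(v̂ > K) > 0`),
`E[v · 1{v̂ > K}] / P(v̂ > K) ≤ (K + M) + E[v · 1{v > K + M}] / P(v > K + M)`,
i.e. `E[v | v̂ > K] ≤ (K + M) + E[v | v > K + M]`. -/
theorem stmt_12
    {Ω : Type*} [MeasurableSpace Ω] (μ : Measure Ω) [IsProbabilityMeasure μ]
    (v vh : Ω → ℝ) (hv_meas : Measurable v) (hvh_meas : Measurable vh)
    (hv_nonneg : ∀ᵐ ω ∂μ, 0 ≤ v ω) (hv_int : Integrable v μ)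
    (M : ℝ) (hM : 0 < M) (herr : ∀ᵐ ω ∂μ, |v ω - vh ω| ≤ M) :
    ∀ K : ℝ, 0 < K → 0 < μ {ω | K + M < v ω} →
      0 < μ {ω | K < vh ω} ∧
      (∫ ω in {ω | K < vh ω}, v ω ∂μ) / (μ {ω | K < vh ω}).toReal ≤
        (K + M) + (∫ ω in {ω | K + M < v ω}, v ω ∂μ) / (μ {ω | K + M < v ω}).toReal := by
  intro K hK h_pos
  have h_subset : {ω | K + M < v ω} ≤ᵐ[μ] {ω | K < vh ω} := by
    filter_upwards [herr] with ω hω (hω_large : K + M < v ω)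
    show K < vh ω
    linarith [(abs_le.mp hω).2]
  refine ⟨h_pos.trans_le (measure_mono_ae h_subset), ?_⟩
  exact setIntegral_div_le_add_setIntegral_div hv_int hv_nonneg
    (measurableSet_lt measurable_const hvh_meas) (measurableSet_lt measurable_const hv_meas)
    (by linarith) (fun ω hω => not_lt.mp hω.2) h_subset h_pos
end

section
/- Let Φ̄ : ℝ → [0,1] be nonincreasing with Φ̄(0) > 0, and suppose that for every M > 0, Φ̄(t − M)/F̄(t) → 0 as t → ∞. Define R(K) = (∫₀^∞ t f(t) Φ̄(K − t) dt) / (∫₀^∞ f(t) Φ̄(K − t) dt) for K > 0. Then R(K) → ∞ as K → ∞. -/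
open MeasureTheory Filter Set

/-!
Write `D(K) = ∫ f(t) Φ̄(K - t) dt` for the denominator. Since `Φ̄(K - t) ≥ Φ̄(0)` for `t > K`,
`D(K) ≥ Φ̄(0) F̄(K)`, while for fixed `A` the part of `D(K)` coming from `t ≤ A` is at most
`Φ̄(K - A)`, which the light-tail hypothesis makes `o(F̄(K))`. So eventually at least half of
the weighted mass lies beyond `A`, and the weighted mean `R(K)` is at least `A / 2`.
-/

lemma setIntegral_Ioi_eq_Ioc_add_Ioi {g : ℝ → ℝ} {a b : ℝ} (hab : a ≤ b)
    (hg : IntegrableOn g (Ioi a)) :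
    ∫ t in Ioi a, g t = (∫ t in Ioc a b, g t) + ∫ t in Ioi b, g t := by
  rw [← setIntegral_union (Ioc_disjoint_Ioi le_rfl) measurableSet_Ioi
    (hg.mono_set Ioc_subset_Ioi_self) (hg.mono_set (Ioi_subset_Ioi hab)),
    Ioc_union_Ioi_eq_Ioi hab]

lemma half_le_integral_mul_div_integral_of_two_mul_integral_Ioc_le {g : ℝ → ℝ} {A : ℝ}
    (hA : 0 ≤ A) (hg_nonneg : ∀ t, 0 < t → 0 ≤ g t) (hg : IntegrableOn g (Ioi 0))
    (htg : IntegrableOn (fun t => t * g t) (Ioi 0)) (hpos : 0 < ∫ t in Ioi 0, g t)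
    (hhead : 2 * ∫ t in Ioc 0 A, g t ≤ ∫ t in Ioi 0, g t) :
    A / 2 ≤ (∫ t in Ioi 0, t * g t) / ∫ t in Ioi 0, g t := by
  have hsplit := setIntegral_Ioi_eq_Ioc_add_Ioi hA hg
  have htail : A * ∫ t in Ioi A, g t ≤ ∫ t in Ioi A, t * g t := by
    rw [← integral_const_mul]
    refine setIntegral_mono_on ((hg.mono_set (Ioi_subset_Ioi hA)).const_mul A)
      (htg.mono_set (Ioi_subset_Ioi hA)) measurableSet_Ioi fun t (ht : A < t) => ?_
    exact mul_le_mul_of_nonneg_right ht.le (hg_nonneg t (hA.trans_lt ht))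
  have hhead_moment : 0 ≤ ∫ t in Ioc 0 A, t * g t :=
    setIntegral_nonneg measurableSet_Ioc fun t ht => mul_nonneg ht.1.le (hg_nonneg t ht.1)
  rw [div_le_div_iff₀ two_pos hpos, setIntegral_Ioi_eq_Ioc_add_Ioi hA htg]
  nlinarith

section WeightedDensity

variable {f Φ : ℝ → ℝ}

lemma integrableOn_mul_comp_sub {s : Set ℝ} (hf : IntegrableOn f s) (hΦ_meas : Measurable Φ)
    (hΦ_range : ∀ t, Φ t ∈ Icc (0:ℝ) 1) (K : ℝ) :
    IntegrableOn (fun t => f t * Φ (K - t)) s :=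
  hf.mul_bdd (hΦ_meas.comp (measurable_const.sub measurable_id)).aestronglyMeasurable
    (ae_of_all _ fun t => by
      rw [Real.norm_eq_abs, abs_of_nonneg (hΦ_range _).1]; exact (hΦ_range _).2)

lemma mul_integral_Ioi_le_integral_mul_comp_sub (hf_nonneg : ∀ t, 0 ≤ f t)
    (hf : IntegrableOn f (Ioi 0)) (hΦ_anti : Antitone Φ) (hΦ_range : ∀ t, Φ t ∈ Icc (0:ℝ) 1)
    {K : ℝ} (hK : 0 ≤ K) :
    Φ 0 * ∫ t in Ioi K, f t ≤ ∫ t in Ioi 0, f t * Φ (K - t) := by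
  have hint := integrableOn_mul_comp_sub hf hΦ_anti.measurable hΦ_range K
  have hfar : ∫ t in Ioi K, f t * Φ 0 ≤ ∫ t in Ioi K, f t * Φ (K - t) :=
    setIntegral_mono_on ((hf.mono_set (Ioi_subset_Ioi hK)).mul_const _)
      (hint.mono_set (Ioi_subset_Ioi hK)) measurableSet_Ioi fun t (ht : K < t) =>
      mul_le_mul_of_nonneg_left (hΦ_anti (by linarith)) (hf_nonneg t)
  have hnear : 0 ≤ ∫ t in Ioc 0 K, f t * Φ (K - t) :=
    setIntegral_nonneg measurableSet_Ioc fun t _ => mul_nonneg (hf_nonneg t) (hΦ_range _).1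
  rw [integral_mul_const] at hfar
  rw [setIntegral_Ioi_eq_Ioc_add_Ioi hK hint]
  linarith

lemma integral_Ioc_mul_comp_sub_le {A : ℝ} (hf_nonneg : ∀ t, 0 ≤ f t)
    (hf : IntegrableOn f (Ioc 0 A))
    (hΦ_anti : Antitone Φ) (hΦ_range : ∀ t, Φ t ∈ Icc (0:ℝ) 1) (K : ℝ) :
    ∫ t in Ioc 0 A, f t * Φ (K - t) ≤ (∫ t in Ioc 0 A, f t) * Φ (K - A) := by
  rw [← integral_mul_const]
  exact setIntegral_mono_on (integrableOn_mul_comp_sub hf hΦ_anti.measurable hΦ_range K)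
    (hf.mul_const _) measurableSet_Ioc fun t ht =>
    mul_le_mul_of_nonneg_left (hΦ_anti (by linarith [ht.2])) (hf_nonneg t)

end WeightedDensity

theorem stmt_16_general
    (f : ℝ → ℝ) (hf_nonneg : ∀ t, 0 ≤ f t)
    (hf_prob : ∫ t in Ioi (0:ℝ), f t = 1)
    (hf_mean : ∫ t in Ioi (0:ℝ), t * f t = 1)
    (Fbar : ℝ → ℝ)
    (hFbar : ∀ x, Fbar x = 1 - ∫ t in Ioc (0:ℝ) x, f t)
    (hFbar_pos : ∀ x, 0 ≤ x → 0 < Fbar x)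
    (Φ : ℝ → ℝ) (hΦ_range : ∀ t, Φ t ∈ Icc (0:ℝ) 1) (hΦ_anti : Antitone Φ)
    (hΦ0 : 0 < Φ 0)
    (hlight : ∀ M : ℝ, 0 < M →
      Tendsto (fun t : ℝ => Φ (t - M) / Fbar t) atTop (nhds 0))
    (R : ℝ → ℝ)
    (hR : ∀ K, R K = (∫ t in Ioi (0:ℝ), t * f t * Φ (K - t)) /
      ∫ t in Ioi (0:ℝ), f t * Φ (K - t)) :
    Tendsto R atTop atTop := by
  have hf : IntegrableOn f (Ioi 0) := Integrable.of_integral_ne_zero (by simp [hf_prob])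
  have htf : IntegrableOn (fun t => t * f t) (Ioi 0) :=
    Integrable.of_integral_ne_zero (by simp [hf_mean])
  have hFbar_tail : ∀ K, 0 ≤ K → Fbar K = ∫ t in Ioi K, f t := fun K hK => by
    linarith [hFbar K, setIntegral_Ioi_eq_Ioc_add_Ioi hK hf]
  suffices h : ∀ A, 0 < A → ∀ᶠ K in atTop, A / 2 ≤ R K by
    refine tendsto_atTop.2 fun b => (h (max (2 * b) 1) (by positivity)).mono fun K hK => ?_
    linarith [le_max_left (2 * b) 1]
  intro A hA
  filter_upwards [(hlight A hA).eventually (gt_mem_nhds (half_pos hΦ0)),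
    eventually_ge_atTop A] with K hsmall hKA
  have hK : 0 ≤ K := hA.le.trans hKA
  have hFK := hFbar_pos K hK
  have hfar := mul_integral_Ioi_le_integral_mul_comp_sub hf_nonneg hf hΦ_anti hΦ_range hK
  have hnear := integral_Ioc_mul_comp_sub_le hf_nonneg (hf.mono_set Ioc_subset_Ioi_self)
    hΦ_anti hΦ_range (A := A) K
  rw [← hFbar_tail K hK] at hfar
  have hmass : ∫ t in Ioc 0 A, f t ≤ 1 := by linarith [hFbar A, hFbar_pos A hA.le]
  have hΦKA : Φ (K - A) < Φ 0 / 2 * Fbar K := (div_lt_iff₀ hFK).1 hsmall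
  rw [hR K]
  simp only [mul_assoc]
  refine half_le_integral_mul_div_integral_of_two_mul_integral_Ioc_le hA.le
    (fun t _ => mul_nonneg (hf_nonneg t) (hΦ_range _).1)
    (integrableOn_mul_comp_sub hf hΦ_anti.measurable hΦ_range K)
    (by simpa only [mul_assoc] using
      integrableOn_mul_comp_sub htf hΦ_anti.measurable hΦ_range K)
    (by nlinarith) ?_
  nlinarith [(hΦ_range (K - A)).1]

/-- With `f` a probability density on `(0,∞)` with unit mean and positive
tail cdf `F̄`: let `Φ̄ : ℝ → [0,1]` be nonincreasing with `Φ̄(0) > 0` and suppose that for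
every `M > 0`, `Φ̄(t - M)/F̄(t) → 0` as `t → ∞`. Then
`R(K) = (∫₀^∞ t f(t) Φ̄(K-t) dt)/(∫₀^∞ f(t) Φ̄(K-t) dt) → ∞` as `K → ∞`. -/
theorem stmt_16
    (f : ℝ → ℝ) (hf_meas : Measurable f) (hf_nonneg : ∀ t, 0 ≤ f t)
    (hf_prob : ∫ t in Ioi (0:ℝ), f t = 1)
    (hf_mean : ∫ t in Ioi (0:ℝ), t * f t = 1)
    (Fbar : ℝ → ℝ)
    (hFbar : ∀ x, Fbar x = 1 - ∫ t in Ioc (0:ℝ) x, f t)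
    (hFbar_pos : ∀ x, 0 ≤ x → 0 < Fbar x)
    (Φ : ℝ → ℝ) (hΦ_range : ∀ t, Φ t ∈ Icc (0:ℝ) 1) (hΦ_anti : Antitone Φ)
    (hΦ0 : 0 < Φ 0)
    (hlight : ∀ M : ℝ, 0 < M →
      Tendsto (fun t : ℝ => Φ (t - M) / Fbar t) atTop (nhds 0))
    (R : ℝ → ℝ)
    (hR : ∀ K, R K = (∫ t in Ioi (0:ℝ), t * f t * Φ (K - t)) /
      ∫ t in Ioi (0:ℝ), f t * Φ (K - t)) :
    Tendsto R atTop atTop :=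
  stmt_16_general f hf_nonneg hf_prob hf_mean Fbar hFbar hFbar_pos Φ hΦ_range hΦ_anti hΦ0 hlight R
    hR
end

section
/- Let Φ̄ : ℝ → [0,1] be nonincreasing with Φ̄(0) > 0, and suppose that for every a > 0, Φ̄(a t)/F̄(t) → 0 as t → ∞. Define R(K) = (∫₀^∞ t f(t) Φ̄(K − t) dt) / (∫₀^∞ f(t) Φ̄(K − t) dt) for K > 0. Then liminf_{K→∞} R(K)/K ≥ 1; in fact, for every a ∈ (0,1) and every K > 0, R(K) ≥ (1 − a) K (1 − Φ̄(aK)/(Φ̄(0) F̄(K))). -/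
open MeasureTheory Filter Set

lemma stmt_17_aux
    (f : ℝ → ℝ) (hf_meas : Measurable f) (hf_nonneg : ∀ t, 0 ≤ f t)
    (hf_prob : ∫ t in Ioi (0:ℝ), f t = 1)
    (hf_mean : ∫ t in Ioi (0:ℝ), t * f t = 1)
    (Fbar : ℝ → ℝ)
    (hFbar : ∀ x, Fbar x = 1 - ∫ t in Ioc (0:ℝ) x, f t)
    (hFbar_pos : ∀ x, 0 ≤ x → 0 < Fbar x)
    (Φ : ℝ → ℝ) (hΦ_range : ∀ t, Φ t ∈ Icc (0:ℝ) 1) (hΦ_anti : Antitone Φ)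
    (hΦ0 : 0 < Φ 0)
    (R : ℝ → ℝ)
    (hR : ∀ K, R K = (∫ t in Ioi (0:ℝ), t * f t * Φ (K - t)) /
      ∫ t in Ioi (0:ℝ), f t * Φ (K - t)) :
    ∀ a : ℝ, a ∈ Ioo (0:ℝ) 1 → ∀ K : ℝ, 0 < K →
      (1 - a) * K * (1 - Φ (a * K) / (Φ 0 * Fbar K)) ≤ R K := by
  intro a ha K hK
  have hΦm : Measurable Φ := hΦ_anti.measurable
  have hf_int : IntegrableOn f (Ioi (0:ℝ)) := by
    by_contra h
    rw [integral_undef h] at hf_prob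
    norm_num at hf_prob
  have htf_int : IntegrableOn (fun t => t * f t) (Ioi (0:ℝ)) := by
    by_contra h
    rw [integral_undef h] at hf_mean
    norm_num at hf_mean
  set g : ℝ → ℝ := fun t => f t * Φ (K - t) with hg_def
  set h : ℝ → ℝ := fun t => t * f t * Φ (K - t) with hh_def
  have hg_meas : Measurable g :=
    hf_meas.mul (hΦm.comp (measurable_const.sub measurable_id))
  have hh_meas : Measurable h :=
    (measurable_id.mul hf_meas).mul (hΦm.comp (measurable_const.sub measurable_id))
  have hg_nonneg : ∀ t, 0 ≤ g t := fun t => mul_nonneg (hf_nonneg t) (hΦ_range _).1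
  have hg_le : ∀ t, g t ≤ f t := fun t =>
    mul_le_of_le_one_right (hf_nonneg t) (hΦ_range _).2
  have hg_int : IntegrableOn g (Ioi (0:ℝ)) := by
    refine hf_int.mono' hg_meas.aestronglyMeasurable ?_
    exact Filter.Eventually.of_forall fun t => by
      rw [Real.norm_eq_abs, abs_of_nonneg (hg_nonneg t)]; exact hg_le t
  have hh_int : IntegrableOn h (Ioi (0:ℝ)) := by
    refine htf_int.mono' hh_meas.aestronglyMeasurable ?_
    filter_upwards [ae_restrict_mem measurableSet_Ioi] with t ht
    have ht0 : (0:ℝ) ≤ t := le_of_lt ht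
    have hnn : 0 ≤ h t := mul_nonneg (mul_nonneg ht0 (hf_nonneg t)) (hΦ_range _).1
    rw [Real.norm_eq_abs, abs_of_nonneg hnn]
    exact mul_le_of_le_one_right (mul_nonneg ht0 (hf_nonneg t)) (hΦ_range _).2
  -- tail cdf as integral over the tail
  have hsplit_f : ∀ x : ℝ, 0 ≤ x →
      (∫ t in Ioi (0:ℝ), f t) = (∫ t in Ioc (0:ℝ) x, f t) + ∫ t in Ioi x, f t := by
    intro x hx
    rw [← setIntegral_union (Ioc_disjoint_Ioi le_rfl) measurableSet_Ioi
      (hf_int.mono_set Ioc_subset_Ioi_self) (hf_int.mono_set (Ioi_subset_Ioi hx)),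
      Ioc_union_Ioi_eq_Ioi hx]
  have hFtail : Fbar K = ∫ t in Ioi K, f t := by
    have := hsplit_f K hK.le
    rw [hf_prob] at this
    rw [hFbar]; linarith
  set D : ℝ := ∫ t in Ioi (0:ℝ), g t with hD_def
  set Φa : ℝ := Φ (a * K) with hΦa_def
  have hΦa_nonneg : 0 ≤ Φa := (hΦ_range _).1
  -- lower bound on the denominator
  have hD_ge : Φ 0 * Fbar K ≤ D := by
    have h1 : Φ 0 * Fbar K = ∫ t in Ioi K, Φ 0 * f t := by
      rw [hFtail, integral_const_mul]
    have h2 : (∫ t in Ioi K, Φ 0 * f t) ≤ ∫ t in Ioi K, g t := by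
      refine setIntegral_mono_on ((hf_int.mono_set (Ioi_subset_Ioi hK.le)).const_mul _)
        (hg_int.mono_set (Ioi_subset_Ioi hK.le)) measurableSet_Ioi ?_
      intro t ht
      have hKt : K - t ≤ 0 := by simp only [mem_Ioi] at ht; linarith
      calc Φ 0 * f t ≤ Φ (K - t) * f t :=
            mul_le_mul_of_nonneg_right (hΦ_anti hKt) (hf_nonneg t)
        _ = g t := mul_comm _ _
    have h3 : (∫ t in Ioi K, g t) ≤ D := by
      refine setIntegral_mono_set hg_int ?_ (HasSubset.Subset.eventuallyLE (Ioi_subset_Ioi hK.le))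
      exact Filter.Eventually.of_forall fun t => hg_nonneg t
    linarith
  have hD_pos : 0 < D := lt_of_lt_of_le (mul_pos hΦ0 (hFbar_pos K hK.le)) hD_ge
  set c : ℝ := (1 - a) * K with hc_def
  have hc_pos : 0 < c := mul_pos (by linarith [ha.2]) hK
  -- bound on the head part of the denominator integral
  have hIoc_le : (∫ t in Ioc (0:ℝ) c, g t) ≤ Φa := by
    have h1 : (∫ t in Ioc (0:ℝ) c, g t) ≤ ∫ t in Ioc (0:ℝ) c, Φa * f t := by
      refine setIntegral_mono_on (hg_int.mono_set Ioc_subset_Ioi_self)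
        ((hf_int.mono_set Ioc_subset_Ioi_self).const_mul _) measurableSet_Ioc ?_
      intro t ht
      have haK : a * K ≤ K - t := by
        simp only [mem_Ioc] at ht
        have := ht.2
        rw [hc_def] at this
        nlinarith
      calc g t = Φ (K - t) * f t := mul_comm _ _
        _ ≤ Φa * f t := mul_le_mul_of_nonneg_right (hΦ_anti haK) (hf_nonneg t)
    have h2 : (∫ t in Ioc (0:ℝ) c, Φa * f t) = Φa * ∫ t in Ioc (0:ℝ) c, f t := by
      rw [integral_const_mul]
    have h3 : (∫ t in Ioc (0:ℝ) c, f t) ≤ 1 := by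
      rw [← hf_prob]
      refine setIntegral_mono_set hf_int ?_
        (HasSubset.Subset.eventuallyLE Ioc_subset_Ioi_self)
      exact Filter.Eventually.of_forall fun t => hf_nonneg t
    calc (∫ t in Ioc (0:ℝ) c, g t) ≤ Φa * ∫ t in Ioc (0:ℝ) c, f t := h1.trans h2.le
      _ ≤ Φa * 1 := mul_le_mul_of_nonneg_left h3 hΦa_nonneg
      _ = Φa := mul_one _
  have hsplit_g : D = (∫ t in Ioc (0:ℝ) c, g t) + ∫ t in Ioi c, g t := by
    rw [hD_def, ← setIntegral_union (Ioc_disjoint_Ioi le_rfl) measurableSet_Ioi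
      (hg_int.mono_set Ioc_subset_Ioi_self) (hg_int.mono_set (Ioi_subset_Ioi hc_pos.le)),
      Ioc_union_Ioi_eq_Ioi hc_pos.le]
  -- lower bound on the numerator
  set N : ℝ := ∫ t in Ioi (0:ℝ), h t with hN_def
  have hN_ge : c * (D - Φa) ≤ N := by
    have h1 : c * (∫ t in Ioi c, g t) ≤ ∫ t in Ioi c, h t := by
      rw [← integral_const_mul]
      refine setIntegral_mono_on ((hg_int.mono_set (Ioi_subset_Ioi hc_pos.le)).const_mul _)
        (hh_int.mono_set (Ioi_subset_Ioi hc_pos.le)) measurableSet_Ioi ?_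
      intro t ht
      simp only [mem_Ioi] at ht
      have : c * g t = c * f t * Φ (K - t) := by rw [hg_def]; ring
      rw [this, hh_def]
      refine mul_le_mul_of_nonneg_right (mul_le_mul_of_nonneg_right ht.le (hf_nonneg t))
        (hΦ_range _).1
    have h2 : (∫ t in Ioi c, h t) ≤ N := by
      refine setIntegral_mono_set hh_int ?_
        (HasSubset.Subset.eventuallyLE (Ioi_subset_Ioi hc_pos.le))
      filter_upwards [ae_restrict_mem measurableSet_Ioi] with t ht
      exact mul_nonneg (mul_nonneg (le_of_lt ht) (hf_nonneg t)) (hΦ_range _).1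
    have h3 : D - Φa ≤ ∫ t in Ioi c, g t := by linarith [hIoc_le, hsplit_g]
    calc c * (D - Φa) ≤ c * ∫ t in Ioi c, g t :=
          mul_le_mul_of_nonneg_left h3 hc_pos.le
      _ ≤ ∫ t in Ioi c, h t := h1
      _ ≤ N := h2
  -- conclude
  have hRK : R K = N / D := hR K
  have hstep : c * (D - Φa) / D ≤ R K := by
    rw [hRK]
    exact (div_le_div_iff_of_pos_right hD_pos).2 hN_ge
  have e1 : c * (D - Φa) / D = c - c * Φa / D := by
    field_simp
  have e2 : c * Φa / D ≤ c * Φa / (Φ 0 * Fbar K) :=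
    div_le_div_of_nonneg_left (mul_nonneg hc_pos.le hΦa_nonneg)
      (mul_pos hΦ0 (hFbar_pos K hK.le)) hD_ge
  calc (1 - a) * K * (1 - Φa / (Φ 0 * Fbar K))
      = c - c * Φa / (Φ 0 * Fbar K) := by rw [hc_def]; ring
    _ ≤ c - c * Φa / D := by linarith
    _ = c * (D - Φa) / D := e1.symm
    _ ≤ R K := hstep

/-- With `f` a probability density on `(0,∞)` with unit mean and positive
tail cdf `F̄`: let `Φ̄ : ℝ → [0,1]` be nonincreasing with `Φ̄(0) > 0`, and suppose that for
every `a > 0`, `Φ̄(a t)/F̄(t) → 0` as `t → ∞`. Then, with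
`R(K) = (∫₀^∞ t f(t) Φ̄(K-t) dt)/(∫₀^∞ f(t) Φ̄(K-t) dt)`, one has
`liminf_{K→∞} R(K)/K ≥ 1`; in fact for every `a ∈ (0,1)` and every `K > 0`,
`R(K) ≥ (1-a) K (1 - Φ̄(aK)/(Φ̄(0) F̄(K)))`. -/
theorem stmt_17
    (f : ℝ → ℝ) (hf_meas : Measurable f) (hf_nonneg : ∀ t, 0 ≤ f t)
    (hf_prob : ∫ t in Ioi (0:ℝ), f t = 1)
    (hf_mean : ∫ t in Ioi (0:ℝ), t * f t = 1)
    (Fbar : ℝ → ℝ)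
    (hFbar : ∀ x, Fbar x = 1 - ∫ t in Ioc (0:ℝ) x, f t)
    (hFbar_pos : ∀ x, 0 ≤ x → 0 < Fbar x)
    (Φ : ℝ → ℝ) (hΦ_range : ∀ t, Φ t ∈ Icc (0:ℝ) 1) (hΦ_anti : Antitone Φ)
    (hΦ0 : 0 < Φ 0)
    (hlight : ∀ a : ℝ, 0 < a →
      Tendsto (fun t : ℝ => Φ (a * t) / Fbar t) atTop (nhds 0))
    (R : ℝ → ℝ)
    (hR : ∀ K, R K = (∫ t in Ioi (0:ℝ), t * f t * Φ (K - t)) /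
      ∫ t in Ioi (0:ℝ), f t * Φ (K - t)) :
    (1 : EReal) ≤ Filter.liminf (fun K : ℝ => ((R K / K : ℝ) : EReal)) atTop ∧
    ∀ a : ℝ, a ∈ Ioo (0:ℝ) 1 → ∀ K : ℝ, 0 < K →
      (1 - a) * K * (1 - Φ (a * K) / (Φ 0 * Fbar K)) ≤ R K := by
  have key := stmt_17_aux f hf_meas hf_nonneg hf_prob hf_mean Fbar hFbar hFbar_pos
    Φ hΦ_range hΦ_anti hΦ0 R hR
  refine ⟨?_, key⟩
  -- For each `a ∈ (0,1)` the liminf is at least `1 - a`.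
  have h1a : ∀ a : ℝ, a ∈ Ioo (0:ℝ) 1 →
      ((1 - a : ℝ) : EReal) ≤ Filter.liminf (fun K : ℝ => ((R K / K : ℝ) : EReal)) atTop := by
    intro a ha
    set lb : ℝ → ℝ := fun K => (1 - a) * (1 - Φ (a * K) / (Φ 0 * Fbar K)) with hlb_def
    have h0 : Tendsto (fun K : ℝ => Φ (a * K) / (Φ 0 * Fbar K)) atTop (nhds 0) := by
      have := (hlight a ha.1).mul_const (Φ 0)⁻¹
      simp only [zero_mul] at this
      refine this.congr fun K => ?_
      ring
    have htend : Tendsto lb atTop (nhds (1 - a)) := by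
      have := (h0.const_sub 1).const_mul (1 - a)
      simpa using this
    have hE : Tendsto (fun K => ((lb K : ℝ) : EReal)) atTop (nhds ((1 - a : ℝ) : EReal)) :=
      EReal.tendsto_coe.2 htend
    have hliminf_eq : Filter.liminf (fun K => ((lb K : ℝ) : EReal)) atTop = ((1 - a : ℝ) : EReal) :=
      hE.liminf_eq
    have hle : ∀ᶠ K in atTop, ((lb K : ℝ) : EReal) ≤ ((R K / K : ℝ) : EReal) := by
      filter_upwards [eventually_gt_atTop (0:ℝ)] with K hK
      have hkey := key a ha K hK
      have hlbK : lb K ≤ R K / K := by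
        rw [le_div_iff₀ hK]
        calc lb K * K = (1 - a) * K * (1 - Φ (a * K) / (Φ 0 * Fbar K)) := by
              rw [hlb_def]; ring
          _ ≤ R K := hkey
      exact EReal.coe_le_coe_iff.2 hlbK
    calc ((1 - a : ℝ) : EReal) = Filter.liminf (fun K => ((lb K : ℝ) : EReal)) atTop :=
          hliminf_eq.symm
      _ ≤ _ := Filter.liminf_le_liminf hle
  refine le_of_forall_lt fun cE hcE => ?_
  obtain ⟨d, hcd, hd1⟩ := exists_between hcE
  have hdbot : d ≠ ⊥ := fun hd => by simp [hd] at hcd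
  have hdtop : d ≠ ⊤ := fun hd => by rw [hd] at hd1; exact (not_top_lt hd1).elim
  lift d to ℝ using ⟨hdtop, hdbot⟩ with r
  have hr1 : r < 1 := by exact_mod_cast hd1
  set m : ℝ := max r (1/2) with hm_def
  have hm1 : m < 1 := max_lt hr1 (by norm_num)
  have hm0 : (1/2 : ℝ) ≤ m := le_max_right _ _
  have ha : (1 - m) ∈ Ioo (0:ℝ) 1 := ⟨by linarith, by linarith⟩
  have := h1a (1 - m) ha
  have hrm : ((r : ℝ) : EReal) ≤ ((m : ℝ) : EReal) := by
    exact_mod_cast le_max_left r (1/2)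
  calc cE < (r : EReal) := hcd
    _ ≤ (m : EReal) := hrm
    _ = ((1 - (1 - m) : ℝ) : EReal) := by norm_num
    _ ≤ _ := this
end
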